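/- arXiv:2307.14217 — 2 statements merged into one kernel-verified Lean document; each statement's English description precedes it below -/
import Mathlib

section
/- Discrete Gronwall lemma with variable steps: Let {k_n}, {a_n}, {b_n}, {c_n}, {γ_n} be sequences of nonnegative reals and B ≥ 0 a constant such that for each n, a_n + Σ_{m=0}^n k_m b_m ≤ Σ_{m=0}^n k_m γ_m a_m + Σ_{m=0}^n k_m c_m + B, and k_m γ_m < 1 for all m ≤ n. Then, with σ_m := (1 − k_m γ_m)^{-1}, it holds a_n + Σ_{m=0}^n k_m b_m ≤ exp(Σ_{m=0}^n k_m σ_m γ_m) · (Σ_{m=0}^n k_m c_m + B). -/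
/-!
Solving the implicit inequality at step `n` for `a n` (possible because `k n * γ n < 1`) gives
the explicit recursion `y n ≤ x n * (∑ m < n, y m + R n)` for `y m = k m γ m a m`,
`x m = k m σ m γ m` and the nondecreasing forcing `R n = ∑ m ≤ n, k m c m + B`. Along this
recursion `∑ m < n, y m + R n` grows at step `n` by at most the factor `1 + x n ≤ exp (x n)`,
apart from the increment of `R`, which the factor `exp (∑ x) ≥ 1` absorbs.
-/

open Finset

namespace VariableStep

lemma le_inv_mul_of_le_add_mul {a p t : ℝ} (ht : t < 1) (h : a ≤ p + t * a) :
    a ≤ (1 - t)⁻¹ * p := by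
  rw [le_inv_mul_iff₀ (sub_pos.2 ht)]
  linarith

section Explicit

variable {x y R : ℕ → ℝ}

lemma discrete_gronwall_step {n : ℕ} (hx : 0 ≤ x n) (hR : 0 ≤ R n)
    (hy : y n ≤ x n * (∑ m ∈ range n, y m + R n))
    (hprev : ∑ m ∈ range n, y m + R n ≤ Real.exp (∑ m ∈ range n, x m) * R n) :
    ∑ m ∈ range (n + 1), y m + R n ≤ Real.exp (∑ m ∈ range (n + 1), x m) * R n := by
  calc ∑ m ∈ range (n + 1), y m + R n
      = (∑ m ∈ range n, y m + R n) + y n := by rw [sum_range_succ]; ring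
    _ ≤ (1 + x n) * (∑ m ∈ range n, y m + R n) := by linarith
    _ ≤ (1 + x n) * (Real.exp (∑ m ∈ range n, x m) * R n) := by gcongr
    _ ≤ Real.exp (x n) * (Real.exp (∑ m ∈ range n, x m) * R n) := by
        gcongr
        linarith [Real.add_one_le_exp (x n)]
    _ = Real.exp (∑ m ∈ range (n + 1), x m) * R n := by
        rw [sum_range_succ, Real.exp_add]; ring

theorem discrete_gronwall_explicit (hx : ∀ n, 0 ≤ x n) (hR : Monotone R) (hR₀ : 0 ≤ R 0)
    (hy : ∀ n, y n ≤ x n * (∑ m ∈ range n, y m + R n)) (n : ℕ) :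
    ∑ m ∈ range (n + 1), y m + R n ≤ Real.exp (∑ m ∈ range (n + 1), x m) * R n := by
  induction n with
  | zero => exact discrete_gronwall_step (hx 0) hR₀ (hy 0) (by simp)
  | succ n ih =>
    refine discrete_gronwall_step (hx _) (hR₀.trans (hR (Nat.zero_le _))) (hy _) ?_
    have hexp : 1 ≤ Real.exp (∑ m ∈ range (n + 1), x m) :=
      Real.one_le_exp (sum_nonneg fun m _ => hx m)
    nlinarith [hR n.le_succ]

end Explicit

theorem discrete_gronwall_general (k a b c γ : ℕ → ℝ) (B : ℝ)
    (hk : ∀ n, 0 ≤ k n) (hb : ∀ n, 0 ≤ b n)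
    (hc : ∀ n, 0 ≤ c n) (hγ : ∀ n, 0 ≤ γ n) (hB : 0 ≤ B)
    (hsmall : ∀ m, k m * γ m < 1)
    (hbound : ∀ n, a n + ∑ m ∈ range (n + 1), k m * b m ≤
      ∑ m ∈ range (n + 1), k m * γ m * a m + ∑ m ∈ range (n + 1), k m * c m + B) :
    ∀ n, a n + ∑ m ∈ range (n + 1), k m * b m ≤
      Real.exp (∑ m ∈ range (n + 1), k m * (1 - k m * γ m)⁻¹ * γ m) *
        (∑ m ∈ range (n + 1), k m * c m + B) := by
  set R : ℕ → ℝ := fun n => ∑ m ∈ range (n + 1), k m * c m + B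
  have hR : Monotone R := monotone_nat_of_le_succ fun n => by
    simp only [R, sum_range_succ _ (n + 1)]
    linarith [mul_nonneg (hk (n + 1)) (hc (n + 1))]
  have hy (n : ℕ) : k n * γ n * a n ≤ k n * (1 - k n * γ n)⁻¹ * γ n *
      (∑ m ∈ range n, k m * γ m * a m + R n) := by
    have hsolved : a n ≤ (1 - k n * γ n)⁻¹ * (∑ m ∈ range n, k m * γ m * a m + R n) := by
      refine le_inv_mul_of_le_add_mul (hsmall n) ?_
      have := hbound n
      rw [sum_range_succ (fun m => k m * γ m * a m) n] at this
      simp only [R]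
      linarith [sum_nonneg fun m (_ : m ∈ range (n + 1)) => mul_nonneg (hk m) (hb m)]
    calc k n * γ n * a n ≤ k n * γ n * ((1 - k n * γ n)⁻¹ * _) := by
          gcongr; exact mul_nonneg (hk n) (hγ n)
      _ = _ := by ring
  intro n
  have hx (m : ℕ) : 0 ≤ k m * (1 - k m * γ m)⁻¹ * γ m :=
    mul_nonneg (mul_nonneg (hk m) (inv_nonneg.2 (sub_pos.2 (hsmall m)).le)) (hγ m)
  have hR₀ : 0 ≤ R 0 := by simpa [R] using add_nonneg (mul_nonneg (hk 0) (hc 0)) hB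
  linarith [hbound n, discrete_gronwall_explicit hx hR hR₀ hy n]

/-- Discrete Gronwall lemma with variable time steps (implicit form). -/
theorem discrete_gronwall (k a b c γ : ℕ → ℝ) (B : ℝ)
    (hk : ∀ n, 0 ≤ k n) (ha : ∀ n, 0 ≤ a n) (hb : ∀ n, 0 ≤ b n)
    (hc : ∀ n, 0 ≤ c n) (hγ : ∀ n, 0 ≤ γ n) (hB : 0 ≤ B)
    (hsmall : ∀ m, k m * γ m < 1)
    (hbound : ∀ n, a n + ∑ m ∈ range (n + 1), k m * b m ≤
      ∑ m ∈ range (n + 1), k m * γ m * a m + ∑ m ∈ range (n + 1), k m * c m + B) :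
    ∀ n, a n + ∑ m ∈ range (n + 1), k m * b m ≤
      Real.exp (∑ m ∈ range (n + 1), k m * (1 - k m * γ m)⁻¹ * γ m) *
        (∑ m ∈ range (n + 1), k m * c m + B) :=
  discrete_gronwall_general k a b c γ B hk hb hc hγ hB hsmall hbound

end VariableStep
end

section
/- Quadratic-linear discrete Gronwall lemma: Let {x_n}, {b_n}, {c_n}, {d_n}, {γ_n} be sequences of nonnegative reals and B ≥ 0 such that for each n ∈ ℕ₀, x_n² + Σ_{m=0}^n b_m ≤ Σ_{m=0}^n γ_m x_m² + Σ_{m=0}^n d_m x_m + Σ_{m=0}^n c_m + B, with γ_m < 1 for all m ≤ n. Then with σ_m := (1 − γ_m)^{-1} it holds x_n² + Σ_{m=0}^n b_m ≤ 2 exp(2 Σ_{m=0}^n σ_m γ_m) · [ (Σ_{m=0}^n d_m)² + Σ_{m=0}^n c_m + B ]. -/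
open Finset

/-- Quadratic-linear discrete Gronwall lemma. -/
theorem discrete_gronwall_quadlinear (x b c d γ : ℕ → ℝ) (B : ℝ)
    (hx : ∀ n, 0 ≤ x n) (hb : ∀ n, 0 ≤ b n) (hc : ∀ n, 0 ≤ c n)
    (hd : ∀ n, 0 ≤ d n) (hγ : ∀ n, 0 ≤ γ n) (hB : 0 ≤ B)
    (hsmall : ∀ m, γ m < 1)
    (hbound : ∀ n, x n ^ 2 + ∑ m ∈ range (n + 1), b m ≤
      ∑ m ∈ range (n + 1), γ m * x m ^ 2 + ∑ m ∈ range (n + 1), d m * x m +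
        ∑ m ∈ range (n + 1), c m + B) :
    ∀ n, x n ^ 2 + ∑ m ∈ range (n + 1), b m ≤
      2 * Real.exp (2 * ∑ m ∈ range (n + 1), (1 - γ m)⁻¹ * γ m) *
        ((∑ m ∈ range (n + 1), d m) ^ 2 + ∑ m ∈ range (n + 1), c m + B) := by
  have hγ1 : ∀ m, (0:ℝ) < 1 - γ m := fun m => by linarith [hsmall m]
  have hne : ∀ m, (1:ℝ) - γ m ≠ 0 := fun m => ne_of_gt (hγ1 m)
  set σ : ℕ → ℝ := fun m => (1 - γ m)⁻¹ with hσdef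
  have hσ0 : ∀ m, 0 ≤ σ m := fun m => inv_nonneg.mpr (hγ1 m).le
  have hσc : ∀ m, σ m * (1 - γ m) = 1 := fun m => inv_mul_cancel₀ (hne m)
  have hσid : ∀ m, σ m = 1 + σ m * γ m := fun m => by linear_combination hσc m
  have hσ1 : ∀ m, 1 ≤ σ m := fun m => by
    nlinarith [hσid m, mul_nonneg (hσ0 m) (hγ m)]
  set P : ℕ → ℝ := fun n => ∏ m ∈ range (n+1), σ m with hPdef
  have hP1 : ∀ n, 1 ≤ P n := fun n => by
    simp only [hPdef]
    have h := Finset.prod_le_prod (f := fun _ : ℕ => (1:ℝ)) (g := σ)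
      (s := range (n+1)) (fun i _ => zero_le_one) (fun i _ => hσ1 i)
    simpa using h
  have hP0 : ∀ n, 0 ≤ P n := fun n => le_trans zero_le_one (hP1 n)
  have hPsucc : ∀ n, P (n+1) = P n * σ (n+1) := fun n => by
    simp only [hPdef]; exact prod_range_succ σ (n+1)
  have hPmono : ∀ m n, m ≤ n → P m ≤ P n := by
    intro m n h
    have : Monotone P := monotone_nat_of_le_succ (fun k => by
      rw [hPsucc k]
      nlinarith [hP0 k, hσ1 (k+1), hP1 k])
    exact this h
  set X : ℕ → ℝ := fun n => (range (n+1)).sup' nonempty_range_add_one x with hXdef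
  have hXx : ∀ m n, m ≤ n → x m ≤ X n := fun m n h =>
    Finset.le_sup' x (mem_range.mpr (Nat.lt_succ_of_le h))
  have hX0 : ∀ n, 0 ≤ X n := fun n => le_trans (hx 0) (hXx 0 n (Nat.zero_le n))
  have hXmono : ∀ n, X n ≤ X (n+1) := fun n =>
    Finset.sup'_mono x (range_subset_range.mpr (by omega)) nonempty_range_add_one
  set W : ℕ → ℝ := fun n =>
    (∑ m ∈ range (n+1), d m) * X n + ((∑ m ∈ range (n+1), c m) + B) with hWdef
  have hD0 : ∀ n, 0 ≤ ∑ m ∈ range (n+1), d m := fun n => sum_nonneg (fun i _ => hd i)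
  have hC0 : ∀ n, 0 ≤ ∑ m ∈ range (n+1), c m := fun n => sum_nonneg (fun i _ => hc i)
  have hW0 : ∀ n, 0 ≤ W n := fun n => by
    have := mul_nonneg (hD0 n) (hX0 n)
    simp only [hWdef]
    have := hC0 n
    nlinarith
  have hWmono : ∀ m n, m ≤ n → W m ≤ W n := by
    intro m n h
    have hDm : ∑ k ∈ range (m+1), d k ≤ ∑ k ∈ range (n+1), d k :=
      sum_le_sum_of_subset_of_nonneg (range_subset_range.mpr (by omega)) (fun i _ _ => hd i)
    have hCm : ∑ k ∈ range (m+1), c k ≤ ∑ k ∈ range (n+1), c k :=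
      sum_le_sum_of_subset_of_nonneg (range_subset_range.mpr (by omega)) (fun i _ _ => hc i)
    have hXm : X m ≤ X n :=
      Finset.sup'_mono x (range_subset_range.mpr (by omega)) nonempty_range_add_one
    simp only [hWdef]
    have h1 : (∑ k ∈ range (m+1), d k) * X m ≤ (∑ k ∈ range (n+1), d k) * X n :=
      mul_le_mul hDm hXm (hX0 m) (hD0 n)
    linarith
  set v : ℕ → ℝ := fun n => ∑ m ∈ range (n+1), γ m * x m ^ 2 with hvdef
  have hv0 : ∀ n, 0 ≤ v n := fun n =>
    sum_nonneg (fun i _ => mul_nonneg (hγ i) (sq_nonneg (x i)))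
  have hXW : ∀ n, x n ^ 2 + ∑ m ∈ range (n+1), b m ≤ v n + W n := by
    intro n
    have h1 : ∑ m ∈ range (n+1), d m * x m ≤ (∑ m ∈ range (n+1), d m) * X n := by
      rw [sum_mul]
      exact sum_le_sum (fun i hi =>
        mul_le_mul_of_nonneg_left (hXx i n (Nat.lt_succ_iff.mp (mem_range.mp hi))) (hd i))
    have h2 := hbound n
    simp only [hvdef, hWdef]
    linarith
  -- key absorption lemma
  have hkey : ∀ (n : ℕ) (A : ℝ), (1 - γ n) * x n ^ 2 ≤ A →
      γ n * x n ^ 2 ≤ (σ n - 1) * A := by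
    intro n A h
    have h2 : σ n * γ n * ((1 - γ n) * x n ^ 2) ≤ σ n * γ n * A :=
      mul_le_mul_of_nonneg_left h (mul_nonneg (hσ0 n) (hγ n))
    have h3 : σ n * γ n * ((1 - γ n) * x n ^ 2) = γ n * x n ^ 2 := by
      linear_combination (γ n * x n ^ 2) * hσc n
    have h4 : σ n - 1 = σ n * γ n := by linarith [hσid n]
    rw [h4]; linarith
  have hb0 : ∀ n, 0 ≤ ∑ m ∈ range (n+1), b m := fun n => sum_nonneg (fun i _ => hb i)
  -- Gronwall induction
  have hv : ∀ n, v n ≤ (P n - 1) * W n := by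
    intro n
    induction n with
    | zero =>
        have h1 := hXW 0
        have hv00 : v 0 = γ 0 * x 0 ^ 2 := by simp [hvdef]
        have hP00 : P 0 = σ 0 := by simp [hPdef]
        have hb00 := hb0 0
        have h2 : (1 - γ 0) * x 0 ^ 2 ≤ W 0 := by rw [hv00] at h1; nlinarith
        have h3 := hkey 0 (W 0) h2
        rw [hv00, hP00]; exact h3
    | succ n ih =>
        have hvs : v (n+1) = v n + γ (n+1) * x (n+1) ^ 2 := by
          simp only [hvdef]; rw [sum_range_succ]
        have h1 := hXW (n+1)
        have hbn := hb0 (n+1)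
        have h2 : (1 - γ (n+1)) * x (n+1) ^ 2 ≤ v n + W (n+1) := by
          rw [hvs] at h1; nlinarith
        have h3 := hkey (n+1) (v n + W (n+1)) h2
        have ih' : v n ≤ (P n - 1) * W (n+1) := by
          have := mul_le_mul_of_nonneg_left (hWmono n (n+1) (by omega))
            (by linarith [hP1 n] : (0:ℝ) ≤ P n - 1)
          linarith
        have hmul : σ (n+1) * v n ≤ σ (n+1) * ((P n - 1) * W (n+1)) :=
          mul_le_mul_of_nonneg_left ih' (hσ0 (n+1))
        have hps := hPsucc n
        rw [hvs, hps]
        nlinarith [h3, hmul, hv0 n, hW0 (n+1), hσ1 (n+1)]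
  have hxPW : ∀ n, x n ^ 2 + ∑ m ∈ range (n+1), b m ≤ P n * W n := by
    intro n
    have h1 := hXW n
    have h2 := hv n
    nlinarith [hW0 n]
  have hXPW : ∀ n, X n ^ 2 ≤ P n * W n := by
    intro n
    obtain ⟨m, hm, hme⟩ := Finset.exists_mem_eq_sup' (nonempty_range_add_one (n := n)) x
    have hmn : m ≤ n := Nat.lt_succ_iff.mp (mem_range.mp hm)
    have h1 : X n ^ 2 ≤ P m * W m := by
      have := hxPW m
      have hbm := hb0 m
      simp only [hXdef]
      rw [hme]
      linarith
    have h2 : P m * W m ≤ P n * W n :=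
      mul_le_mul (hPmono m n hmn) (hWmono m n hmn) (hW0 m) (hP0 n)
    linarith
  -- solve the quadratic in X n
  intro n
  set D : ℝ := ∑ m ∈ range (n+1), d m with hDdef
  set CB : ℝ := (∑ m ∈ range (n+1), c m) + B with hCBdef
  have hCB0 : 0 ≤ CB := by simp only [hCBdef]; linarith [hC0 n]
  have hXq : X n ^ 2 ≤ P n * (D * X n + CB) := by
    have := hXPW n
    simp only [hWdef] at this
    exact this
  have hDX : 2 * (D * X n) ≤ 3 * P n * D ^ 2 + CB := by
    have hPpos : 0 < P n := lt_of_lt_of_le zero_lt_one (hP1 n)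
    have h1 : P n * (2 * (D * X n)) ≤ P n * (3 * P n * D ^ 2 + CB) := by
      nlinarith [hXq, sq_nonneg (2 * P n * D - X n), hP1 n, hX0 n, hD0 n, hCB0]
    exact le_of_mul_le_mul_left h1 hPpos
  have hWb : W n ≤ 3/2 * P n * (D ^ 2 + CB) := by
    simp only [hWdef]
    have := hP1 n
    nlinarith [hDX, hCB0, sq_nonneg D]
  -- final assembly
  set S : ℝ := ∑ m ∈ range (n+1), σ m * γ m with hSdef
  have hS0 : 0 ≤ S := sum_nonneg (fun i _ => mul_nonneg (hσ0 i) (hγ i))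
  have hPexp : P n ≤ Real.exp S := by
    calc P n ≤ ∏ m ∈ range (n+1), Real.exp (σ m * γ m) :=
          prod_le_prod (fun i _ => hσ0 i) (fun i _ => by
            nlinarith [Real.add_one_le_exp (σ i * γ i), hσid i])
      _ = Real.exp S := (Real.exp_sum _ _).symm
  have hexp2 : Real.exp (2 * S) = Real.exp S * Real.exp S := by
    rw [two_mul, Real.exp_add]
  have hP2 : 3/2 * (P n * P n) ≤ 2 * Real.exp (2 * S) := by
    rw [hexp2]
    have h1 : P n * P n ≤ Real.exp S * Real.exp S :=
      mul_le_mul hPexp hPexp (hP0 n) (Real.exp_pos S).le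
    nlinarith [mul_pos (Real.exp_pos S) (Real.exp_pos S)]
  have hfinal : x n ^ 2 + ∑ m ∈ range (n+1), b m ≤ 2 * Real.exp (2 * S) * (D ^ 2 + CB) := by
    have h1 := hxPW n
    have h2 : P n * W n ≤ P n * (3/2 * P n * (D ^ 2 + CB)) :=
      mul_le_mul_of_nonneg_left hWb (hP0 n)
    have h3 : P n * (3/2 * P n * (D ^ 2 + CB)) ≤ 2 * Real.exp (2 * S) * (D ^ 2 + CB) := by
      have hq : 0 ≤ D ^ 2 + CB := by positivity
      nlinarith [hP2, hq]
    exact le_trans h1 (le_trans h2 h3)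
  calc x n ^ 2 + ∑ m ∈ range (n+1), b m ≤ 2 * Real.exp (2 * S) * (D ^ 2 + CB) := hfinal
    _ = 2 * Real.exp (2 * ∑ m ∈ range (n + 1), (1 - γ m)⁻¹ * γ m) *
        ((∑ m ∈ range (n + 1), d m) ^ 2 + ∑ m ∈ range (n + 1), c m + B) := by
      simp only [hSdef, hDdef, hCBdef, hσdef]
      ring
end
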